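/- arXiv:1612.00652 — 2 statements merged into one kernel-verified Lean document; each statement's English description precedes it below -/
import Mathlib

section
/- Let n ≥ 0, ζ = exp(2πi/(n+1)), let N ≥ 1, and let a_1, …, a_N be integers with 1 ≤ a_j ≤ n and ∑ a_j ≡ 0 mod (n+1). Fix R ≥ 1 and for a subset I ⊆ {1,…,N} let c(I) denote the unique integer in {0,…,n} with c(I) ≡ −∑_{i∈I} a_i mod (n+1). Then ∑_{I ⊔ J = {1,…,N}} (−1)^{|J|} B_R(c(I)/(n+1)) = (1/(n+1)) ∑_{l=1}^{n} ∑_{c=0}^{n} ζ^{lc} B_R(c/(n+1)) ∏_{j=1}^{N} (ζ^{l a_j} − 1), where B_R is the R-th Bernoulli polynomial. -/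
open Finset in
/-- Fourier inversion identity for sums of Bernoulli polynomial values:
with `ζ = exp(2πi/(n+1))`, `a_1,…,a_N ∈ {1,…,n}` with `∑ a_j ≡ 0 mod (n+1)`, `R ≥ 1`,
and `c(I) ∈ {0,…,n}` the residue of `−∑_{i∈I} a_i` modulo `n+1`,
`∑_{I ⊔ J = {1,…,N}} (−1)^{|J|} B_R(c(I)/(n+1))
  = (1/(n+1)) ∑_{l=1}^{n} ∑_{c=0}^{n} ζ^{lc} B_R(c/(n+1)) ∏_j (ζ^{a_j l} − 1)`. -/
theorem bernoulli_sum_fourier (n : ℕ) (ζ : ℂ)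
    (hζ : ζ = Complex.exp (2 * Real.pi * Complex.I / (n + 1)))
    (N : ℕ) (hN : 1 ≤ N) (a : Fin N → ℕ)
    (ha1 : ∀ j, 1 ≤ a j) (han : ∀ j, a j ≤ n)
    (hsum : (n + 1) ∣ ∑ j, a j) (R : ℕ) (hR : 1 ≤ R)
    (c : Finset (Fin N) → ℤ)
    (hc : ∀ I : Finset (Fin N), c I = (-(∑ i ∈ I, (a i : ℤ))) % ((n : ℤ) + 1)) :
    ∑ I : Finset (Fin N),
        ((-1 : ℂ)) ^ (N - I.card) *
          (((Polynomial.bernoulli R).eval ((c I : ℚ) / ((n : ℚ) + 1)) : ℚ) : ℂ)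
      = (1 / ((n : ℂ) + 1)) *
          ∑ l ∈ Finset.Icc 1 n, ∑ k ∈ Finset.range (n + 1),
            ζ ^ (l * k) *
              (((Polynomial.bernoulli R).eval ((k : ℚ) / ((n : ℚ) + 1)) : ℚ) : ℂ) *
              ∏ j, (ζ ^ (l * a j) - 1) := by
  classical
  have hn1 : ((n : ℂ) + 1) ≠ 0 := by
    have : ((n + 1 : ℕ) : ℂ) ≠ 0 := Nat.cast_ne_zero.mpr n.succ_ne_zero
    push_cast at this; exact this
  have hprim : IsPrimitiveRoot ζ (n + 1) := by
    rw [hζ]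
    have := Complex.isPrimitiveRoot_exp (n + 1) (Nat.succ_ne_zero n)
    simpa using this
  have hζ1 : ζ ^ (n + 1) = 1 := hprim.pow_eq_one
  set B : ℕ → ℂ := fun k =>
    (((Polynomial.bernoulli R).eval ((k : ℚ) / ((n : ℚ) + 1)) : ℚ) : ℂ) with hB
  -- the root of unity filter
  have rou : ∀ m : ℕ, ∑ l ∈ Finset.range (n + 1), ζ ^ (l * m)
      = if (n + 1) ∣ m then ((n : ℂ) + 1) else 0 := by
    intro m
    have hpow : ∀ l, ζ ^ (l * m) = (ζ ^ m) ^ l := by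
      intro l; rw [mul_comm, pow_mul]
    simp_rw [hpow]
    by_cases hd : (n + 1) ∣ m
    · rw [if_pos hd]
      obtain ⟨q, hq⟩ := hd
      have h1 : ζ ^ m = 1 := by rw [hq, pow_mul, hζ1, one_pow]
      simp [h1]
    · have hne : ζ ^ m ≠ 1 := fun h => hd (hprim.dvd_of_pow_eq_one m h)
      rw [if_neg hd, geom_sum_eq hne]
      have : (ζ ^ m) ^ (n + 1) = 1 := by
        rw [← pow_mul, mul_comm, pow_mul, hζ1, one_pow]
      simp [this]
  have hcb : ∀ I : Finset (Fin N), 0 ≤ c I ∧ c I < (n : ℤ) + 1 := by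
    intro I
    rw [hc I]
    exact ⟨Int.emod_nonneg _ (by positivity), Int.emod_lt_of_pos _ (by positivity)⟩
  have hkey : ∀ (I : Finset (Fin N)) (k : ℕ), k < n + 1 →
      ((n + 1) ∣ (k + ∑ i ∈ I, a i) ↔ k = (c I).toNat) := by
    intro I k hk
    obtain ⟨hb1, hb2⟩ := hcb I
    have hcI := hc I
    set s : ℤ := ∑ i ∈ I, (a i : ℤ) with hs
    have hs0 : 0 ≤ s := Finset.sum_nonneg fun i _ => Int.ofNat_nonneg _
    have hq : -s % ((n : ℤ) + 1) + ((n : ℤ) + 1) * (-s / ((n : ℤ) + 1)) = -s :=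
      Int.emod_add_mul_ediv (-s) ((n : ℤ) + 1)
    have hcs : c I + ((n : ℤ) + 1) * (-s / ((n : ℤ) + 1)) = -s := by
      rw [hcI]; exact hq
    constructor
    · intro hd
      obtain ⟨t, ht⟩ := hd
      have h2 : ((k + ∑ i ∈ I, a i : ℕ) : ℤ) = (((n + 1) * t : ℕ) : ℤ) := by
        exact_mod_cast ht
      push_cast at h2
      rw [← hs] at h2
      have hdiff : ((n : ℤ) + 1) ∣ ((k : ℤ) - c I) := by
        refine ⟨t + (-s) / ((n : ℤ) + 1), ?_⟩
        linear_combination h2 - hcs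
      have hz : (k : ℤ) - c I = 0 := by
        refine Int.eq_zero_of_abs_lt_dvd hdiff ?_
        rw [abs_lt]
        constructor <;> omega
      omega
    · intro hkc
      have hkz : (k : ℤ) = c I := by omega
      have hx : (0 : ℤ) ≤ ((n : ℤ) + 1) * (-((-s) / ((n : ℤ) + 1))) := by
        have : ((n : ℤ) + 1) * (-((-s) / ((n : ℤ) + 1))) = c I + s := by
          linear_combination -hcs
        rw [this]; exact add_nonneg hb1 hs0
      have hge : (0 : ℤ) ≤ -((-s) / ((n : ℤ) + 1)) := by
        by_contra h
        push_neg at h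
        nlinarith [hx]
      refine ⟨(-((-s) / ((n : ℤ) + 1))).toNat, ?_⟩
      have h3 : ((k + ∑ i ∈ I, a i : ℕ) : ℤ)
          = (((n + 1) * (-((-s) / ((n : ℤ) + 1))).toNat : ℕ) : ℤ) := by
        push_cast [Int.toNat_of_nonneg hge]
        rw [← hs]
        linear_combination hkz + hcs
      exact_mod_cast h3
  -- product expansion
  have prodexp : ∀ l : ℕ, ∏ j, (ζ ^ (l * a j) - 1)
      = ∑ I : Finset (Fin N), ζ ^ (l * ∑ i ∈ I, a i) * (-1 : ℂ) ^ (N - I.card) := by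
    intro l
    have hsub : ∀ j : Fin N, ζ ^ (l * a j) - 1 = ζ ^ (l * a j) + (-1) := fun j => by ring
    simp_rw [hsub]
    rw [Finset.prod_add, Finset.powerset_univ]
    refine Finset.sum_congr rfl fun I _ => ?_
    congr 1
    · rw [Finset.prod_pow_eq_pow_sum, Finset.mul_sum]
    · rw [Finset.prod_const, Finset.card_sdiff_of_subset (Finset.subset_univ I), Finset.card_univ,
        Fintype.card_fin]
  -- extend sum over l to include 0
  have hrange : Finset.range (n + 1) = insert 0 (Finset.Icc 1 n) := by
    ext x; simp only [Finset.mem_insert, Finset.mem_range, Finset.mem_Icc]; omega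
  have hRHS : ∑ l ∈ Finset.Icc 1 n, ∑ k ∈ Finset.range (n + 1),
        ζ ^ (l * k) * B k * ∏ j, (ζ ^ (l * a j) - 1)
      = ∑ l ∈ Finset.range (n + 1), ∑ k ∈ Finset.range (n + 1),
        ζ ^ (l * k) * B k * ∏ j, (ζ ^ (l * a j) - 1) := by
    rw [hrange, Finset.sum_insert (by simp)]
    have h0 : ∏ j : Fin N, (ζ ^ (0 * a j) - 1) = 0 :=
      Finset.prod_eq_zero (Finset.mem_univ (⟨0, hN⟩ : Fin N)) (by simp)
    simp [h0, zero_pow (Nat.one_le_iff_ne_zero.mp hN)]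
  rw [hRHS]
  -- swap sums
  have swap : ∑ l ∈ Finset.range (n + 1), ∑ k ∈ Finset.range (n + 1),
        ζ ^ (l * k) * B k * ∏ j, (ζ ^ (l * a j) - 1)
      = ∑ I : Finset (Fin N), (-1 : ℂ) ^ (N - I.card) *
          ∑ k ∈ Finset.range (n + 1), B k *
            ∑ l ∈ Finset.range (n + 1), ζ ^ (l * (k + ∑ i ∈ I, a i)) := by
    have e1 : ∀ l k : ℕ, ζ ^ (l * k) * B k * ∏ j, (ζ ^ (l * a j) - 1)
        = ∑ I : Finset (Fin N), (-1 : ℂ) ^ (N - I.card) *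
            (B k * ζ ^ (l * (k + ∑ i ∈ I, a i))) := by
      intro l k
      rw [prodexp, Finset.mul_sum]
      refine Finset.sum_congr rfl fun I _ => ?_
      rw [mul_add, pow_add]
      ring
    simp_rw [e1, Finset.mul_sum]
    calc ∑ l ∈ Finset.range (n + 1), ∑ k ∈ Finset.range (n + 1),
            ∑ I : Finset (Fin N), (-1 : ℂ) ^ (N - I.card) *
              (B k * ζ ^ (l * (k + ∑ i ∈ I, a i)))
        = ∑ k ∈ Finset.range (n + 1), ∑ l ∈ Finset.range (n + 1),
            ∑ I : Finset (Fin N), (-1 : ℂ) ^ (N - I.card) *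
              (B k * ζ ^ (l * (k + ∑ i ∈ I, a i))) := Finset.sum_comm
      _ = ∑ k ∈ Finset.range (n + 1), ∑ I : Finset (Fin N),
            ∑ l ∈ Finset.range (n + 1), (-1 : ℂ) ^ (N - I.card) *
              (B k * ζ ^ (l * (k + ∑ i ∈ I, a i))) :=
          Finset.sum_congr rfl fun k _ => Finset.sum_comm
      _ = ∑ I : Finset (Fin N), ∑ k ∈ Finset.range (n + 1),
            ∑ l ∈ Finset.range (n + 1), (-1 : ℂ) ^ (N - I.card) *
              (B k * ζ ^ (l * (k + ∑ i ∈ I, a i))) := Finset.sum_comm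
  rw [swap, Finset.mul_sum]
  refine Finset.sum_congr rfl fun I _ => ?_
  have hmem : (c I).toNat ∈ Finset.range (n + 1) := by
    have := hcb I
    simp only [Finset.mem_range]
    omega
  have hinner : ∑ k ∈ Finset.range (n + 1), B k *
        ∑ l ∈ Finset.range (n + 1), ζ ^ (l * (k + ∑ i ∈ I, a i))
      = ((n : ℂ) + 1) * B ((c I).toNat) := by
    have step : ∑ k ∈ Finset.range (n + 1), B k *
          ∑ l ∈ Finset.range (n + 1), ζ ^ (l * (k + ∑ i ∈ I, a i))
        = ∑ k ∈ Finset.range (n + 1),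
            (if k = (c I).toNat then ((n : ℂ) + 1) * B k else 0) := by
      refine Finset.sum_congr rfl fun k hk => ?_
      rw [rou]
      by_cases he : k = (c I).toNat
      · rw [if_pos ((hkey I k (Finset.mem_range.mp hk)).mpr he), if_pos he]; ring
      · rw [if_neg (fun hd => he ((hkey I k (Finset.mem_range.mp hk)).mp hd)), if_neg he]
        ring
    rw [step, Finset.sum_ite_eq' (Finset.range (n + 1)) ((c I).toNat)
      (fun k => ((n : ℂ) + 1) * B k), if_pos hmem]
  rw [hinner]
  have hBc : B ((c I).toNat)
      = (((Polynomial.bernoulli R).eval ((c I : ℚ) / ((n : ℚ) + 1)) : ℚ) : ℂ) := by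
    simp only [hB]
    congr 3
    have := Int.toNat_of_nonneg (hcb I).1
    exact_mod_cast congrArg (Int.cast : ℤ → ℚ) this
  rw [hBc]
  field_simp
end

section
/- For any positive integer m, the number of conjugacy classes of the wreath product ℤ/(n+1) ≀ S_m = (ℤ/(n+1))^m ⋊ S_m equals the number of (n+1)-tuples of partitions (λ^0, …, λ^n) with ∑_{j} |λ^j| = m, i.e., the number of ℤ/(n+1)-weighted partitions of m. -/
/-- The permutation action of `S_m` on `(ℤ/(n+1))^m`, as a homomorphism into the
automorphism group, used to form the wreath product `ℤ/(n+1) ≀ S_m`. -/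
def wreathPermHom (n m : ℕ) :
    Equiv.Perm (Fin m) →* MulAut (Fin m → Multiplicative (ZMod (n + 1))) where
  toFun σ :=
    { toFun := fun f => f ∘ σ.symm
      invFun := fun f => f ∘ σ
      left_inv := fun f => by ext i; simp
      right_inv := fun f => by ext i; simp
      map_mul' := fun f g => rfl }
  map_one' := by ext f i; rfl
  map_mul' := fun σ τ => by ext f i; rfl

/-!
Conjugating `⟨f, σ⟩` by a permutation `π` gives `⟨f ∘ π⁻¹, π σ π⁻¹⟩`, and conjugating it by a
base element `h` gives `⟨x ↦ h x * f x / h (σ⁻¹ x), σ⟩`, which has the same product along every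
cycle of `σ`. So the multiset of pairs (length of a cycle of `σ`, product of `f` along it) is a
class function. Conversely, if `⟨f, σ⟩` and `⟨g, τ⟩` have the same multiset, both `σ` and `τ` are
conjugate to the same product of rotations of blocks, by a permutation matching cycles with equal
data; this reduces to the case `σ = τ`, where `g / f` has trivial product along every cycle. Such a
function is a coboundary `x ↦ h x / h (σ⁻¹ x)`: the coboundary map has kernel the functions constant
on cycles, so by counting, its image fills the whole group of functions with trivial cycle
products. Every multiset of pairs with lengths summing to `m` arises, from rotations of blocks,
and sorting its pairs by their label in `ℤ/(n+1)` gives the `(n+1)`-tuple of partitions.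
-/

open Equiv Finset Function

lemma Fintype.exists_equiv_of_map_univ_val_eq {ι κ δ : Type*} [Fintype ι] [Fintype κ]
    [DecidableEq δ] {F : ι → δ} {G : κ → δ} (h : univ.val.map F = univ.val.map G) :
    ∃ e : ι ≃ κ, ∀ i, G (e i) = F i := by
  have hfiber (c : δ) : Fintype.card {i // F i = c} = Fintype.card {j // G j = c} := by
    have := congrArg (Multiset.count c) h
    simp only [Multiset.count_map, eq_comm (a := c)] at this
    simpa only [Fintype.card_subtype, Finset.card, Finset.filter_val] using this
  exact ⟨ofFiberEquiv fun c => Fintype.equivOfCardEq (hfiber c), ofFiberEquiv_map _⟩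

lemma Fin.val_finRotate {k : ℕ} (t : Fin k) : (finRotate k t : ℕ) = (t + 1) % k := by
  have := t.neZero
  rw [finRotate_apply, Fin.val_add, Fin.val_one']
  simp [Nat.add_mod]

lemma Nat.card_conjClasses_eq_card_range {G X : Type*} [Monoid G] (F : G → X)
    (hF : ∀ a b, IsConj a b ↔ F a = F b) : Nat.card (ConjClasses G) = Nat.card (Set.range F) :=
  Nat.card_congr ((Quotient.congrRight hF).trans (Setoid.quotientKerEquivRange F))

namespace Equiv.Perm

variable {α β : Type*}

section orbitPartition

variable [Fintype α] [DecidableEq α] [Fintype β] [DecidableEq β]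

instance instDecidableRelSameCycleSetoid (σ : Perm α) : DecidableRel (SameCycle.setoid σ) :=
  inferInstanceAs (DecidableRel σ.SameCycle)

def orbitPartition (σ : Perm α) : Finpartition (univ : Finset α) :=
  Finpartition.ofSetoid (SameCycle.setoid σ)

variable {σ : Perm α} {O : Finset α} {x y : α}

lemma mem_orbitPartition_part : y ∈ σ.orbitPartition.part x ↔ σ.SameCycle x y :=
  Finpartition.mem_part_ofSetoid_iff_rel

lemma orbitPartition_part_mem (σ : Perm α) (x : α) :
    σ.orbitPartition.part x ∈ σ.orbitPartition.parts :=
  (Finpartition.part_mem _).2 (mem_univ x)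

lemma mem_orbitPartition_parts :
    O ∈ σ.orbitPartition.parts ↔ ∃ x, σ.orbitPartition.part x = O := by
  refine ⟨fun hO => ?_, fun ⟨x, hx⟩ => hx ▸ σ.orbitPartition_part_mem x⟩
  obtain ⟨x, hx⟩ := σ.orbitPartition.nonempty_of_mem_parts hO
  exact ⟨x, σ.orbitPartition.part_eq_of_mem hO hx⟩

lemma apply_mem_of_mem_orbitPartition (hO : O ∈ σ.orbitPartition.parts) (hx : x ∈ O) :
    σ x ∈ O := by
  rw [← σ.orbitPartition.part_eq_of_mem hO hx, mem_orbitPartition_part]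
  exact sameCycle_apply_right.2 (SameCycle.refl σ x)

lemma symm_apply_mem_of_mem_orbitPartition (hO : O ∈ σ.orbitPartition.parts) (hx : x ∈ O) :
    σ.symm x ∈ O := by
  rw [← σ.orbitPartition.part_eq_of_mem hO hx, mem_orbitPartition_part]
  exact sameCycle_apply_right.1 (by simpa using SameCycle.refl σ x)

lemma prod_comp_symm_of_mem_orbitPartition {A : Type*} [CommMonoid A]
    (hO : O ∈ σ.orbitPartition.parts) (h : α → A) :
    ∏ x ∈ O, h (σ.symm x) = ∏ x ∈ O, h x :=
  prod_nbij' σ.symm σ (fun _ hx => symm_apply_mem_of_mem_orbitPartition hO hx)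
    (fun _ hx => apply_mem_of_mem_orbitPartition hO hx) (by simp) (by simp) (fun _ _ => rfl)

lemma orbitPartition_part_eq_image_range (σ : Perm α) (x : α) :
    σ.orbitPartition.part x = (range (minimalPeriod σ x)).image fun t => (σ ^ t) x := by
  ext y
  simp only [mem_orbitPartition_part, mem_image, mem_range]
  constructor
  · intro h
    obtain ⟨i, -, rfl⟩ := h.exists_pow_eq'
    have hpos := minimalPeriod_pos_of_mem_periodicPts (σ.injective.mem_periodicPts x)
    refine ⟨i % minimalPeriod σ x, Nat.mod_lt _ hpos, ?_⟩
    simpa only [iterate_eq_pow] using iterate_mod_minimalPeriod_eq (f := σ) (x := x) (n := i)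
  · rintro ⟨t, -, rfl⟩
    exact ⟨t, by simp⟩

lemma card_orbitPartition_part (σ : Perm α) (x : α) :
    #(σ.orbitPartition.part x) = minimalPeriod σ x := by
  rw [orbitPartition_part_eq_image_range, card_image_of_injOn, card_range]
  intro s hs t ht hst
  simp only [coe_range] at hs ht
  exact iterate_injOn_Iio_minimalPeriod hs ht (by simpa only [iterate_eq_pow] using hst)

lemma orbitPartition_part_permCongr (e : α ≃ β) (σ : Perm α) (x : α) :
    (e.permCongr σ).orbitPartition.part (e x) = (σ.orbitPartition.part x).map e.toEmbedding := by
  ext y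
  obtain ⟨y, rfl⟩ := e.surjective y
  have hpow (i : ℤ) : (e.permCongr σ) ^ i = e.permCongr (σ ^ i) := by
    rw [← e.permCongrHom_coe, map_zpow]
  simp only [mem_orbitPartition_part, mem_map_equiv, symm_apply_apply, SameCycle, hpow,
    permCongr_apply, e.injective.eq_iff]

lemma orbitPartition_parts_permCongr (e : α ≃ β) (σ : Perm α) :
    (e.permCongr σ).orbitPartition.parts =
      σ.orbitPartition.parts.map e.finsetCongr.toEmbedding := by
  ext O
  simp only [mem_map, mem_orbitPartition_parts, e.surjective.exists,
    orbitPartition_part_permCongr]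
  constructor
  · rintro ⟨x, rfl⟩
    exact ⟨_, ⟨x, rfl⟩, rfl⟩
  · rintro ⟨_, ⟨x, rfl⟩, rfl⟩
    exact ⟨x, rfl⟩

end orbitPartition

section decoratedCycleType

variable [Fintype α] [DecidableEq α] [Fintype β] [DecidableEq β] {A : Type*} [CommMonoid A]

def decoratedCycleType (f : α → A) (σ : Perm α) : Multiset (ℕ × A) :=
  σ.orbitPartition.parts.val.map fun O => (#O, ∏ x ∈ O, f x)

lemma decoratedCycleType_eq_map_univ (f : α → A) (σ : Perm α) :
    decoratedCycleType f σ =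
      (univ : Finset σ.orbitPartition.parts).val.map fun O => (#O.1, ∏ x ∈ O.1, f x) := by
  rw [univ_eq_attach, attach_val]
  exact (Multiset.attach_map_val' _ _).symm

lemma pos_of_mem_decoratedCycleType {f : α → A} {σ : Perm α} {d : ℕ × A}
    (hd : d ∈ decoratedCycleType f σ) : 0 < d.1 := by
  obtain ⟨O, hO, rfl⟩ := Multiset.mem_map.1 hd
  exact card_pos.2 (σ.orbitPartition.nonempty_of_mem_parts hO)

lemma sum_fst_decoratedCycleType (f : α → A) (σ : Perm α) :
    ((decoratedCycleType f σ).map Prod.fst).sum = Fintype.card α := by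
  rw [decoratedCycleType, Multiset.map_map]
  exact σ.orbitPartition.sum_card_parts

lemma decoratedCycleType_permCongr (e : α ≃ β) (f : α → A) (σ : Perm α) :
    decoratedCycleType (f ∘ e.symm) (e.permCongr σ) = decoratedCycleType f σ := by
  rw [decoratedCycleType, orbitPartition_parts_permCongr, map_val, Multiset.map_map]
  refine Multiset.map_congr rfl fun O _ => ?_
  simp [finsetCongr_apply, prod_map]

lemma decoratedCycleType_mul_div {A : Type*} [CommGroup A] (f h : α → A) (σ : Perm α) :
    decoratedCycleType (fun x => h x * f x / h (σ.symm x)) σ = decoratedCycleType f σ :=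
  Multiset.map_congr rfl fun O hO => by
    rw [prod_div_distrib, prod_mul_distrib, prod_comp_symm_of_mem_orbitPartition hO,
      mul_div_cancel_left]

end decoratedCycleType

section blockRotation

variable {ι κ : Type*} (k : ι → ℕ)

def blockRotation : Perm (Σ i, Fin (k i)) :=
  sigmaCongrRight fun i => finRotate (k i)

lemma blockRotation_pow_apply (d : ℕ) (x : Σ i, Fin (k i)) :
    (blockRotation k ^ d) x = ⟨x.1, (finRotate (k x.1) ^ d) x.2⟩ := by
  rw [blockRotation, ← sigmaCongrRightHom_apply, ← map_pow]
  rfl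

lemma sameCycle_blockRotation_iff {x y : Σ i, Fin (k i)} :
    (blockRotation k).SameCycle x y ↔ x.1 = y.1 := by
  constructor
  · rintro ⟨d, rfl⟩
    rw [blockRotation, ← sigmaCongrRightHom_apply, ← map_zpow]
    rfl
  · obtain ⟨i, t⟩ := x
    obtain ⟨j, s⟩ := y
    rintro rfl
    refine ⟨((s - t : Fin (k i)) : ℕ), ?_⟩
    have := t.neZero
    rw [zpow_natCast, blockRotation_pow_apply, ← iterate_eq_pow, ← finCycle_eq_finRotate_iterate]
    simp

lemma semiconj_sigmaCongr_blockRotation (e : ι ≃ κ) {k' : κ → ℕ} (h : ∀ i, k i = k' (e i)) :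
    Semiconj (sigmaCongr e fun i => finCongr (h i)) (blockRotation k) (blockRotation k') := by
  rintro ⟨i, t⟩
  change (⟨e i, finCongr (h i) (finRotate (k i) t)⟩ : Σ j, Fin (k' j))
    = ⟨e i, finRotate (k' (e i)) (finCongr (h i) t)⟩
  congr 1
  ext
  simp only [finCongr_apply, Fin.val_finRotate, Fin.val_cast, h i]

variable [Fintype ι] [DecidableEq ι] {k}

lemma orbitPartition_part_blockRotation (x : Σ i, Fin (k i)) :
    (blockRotation k).orbitPartition.part x = univ.map (Embedding.sigmaMk x.1) := by
  obtain ⟨i, t⟩ := x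
  ext ⟨j, s⟩
  simp only [mem_orbitPartition_part, sameCycle_blockRotation_iff, mem_map, mem_univ, true_and,
    Embedding.sigmaMk_apply, Sigma.mk.injEq]
  exact ⟨by rintro rfl; exact ⟨s, rfl, HEq.rfl⟩, fun ⟨_, h, _⟩ => h⟩

lemma decoratedCycleType_blockRotation {A : Type*} [CommMonoid A] (hk : ∀ i, 0 < k i)
    (f : (Σ i, Fin (k i)) → A) :
    decoratedCycleType f (blockRotation k) = univ.val.map fun i => (k i, ∏ t, f ⟨i, t⟩) := by
  let block : ι ↪ Finset (Σ i, Fin (k i)) :=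
    ⟨fun i => univ.map (Embedding.sigmaMk i), fun i j hij => by
      have : (⟨i, ⟨0, hk i⟩⟩ : Σ i, Fin (k i)) ∈ univ.map (Embedding.sigmaMk j) := by
        simp only at hij
        rw [← hij]
        exact mem_map_of_mem _ (mem_univ _)
      obtain ⟨_, -, h⟩ := mem_map.1 this
      exact (congrArg Sigma.fst h).symm⟩
  have hparts : (blockRotation k).orbitPartition.parts = univ.map block := by
    ext O
    simp only [mem_orbitPartition_parts, orbitPartition_part_blockRotation, mem_map, mem_univ,
      true_and]
    exact ⟨fun ⟨x, hx⟩ => ⟨x.1, hx⟩, fun ⟨i, hi⟩ => ⟨⟨i, ⟨0, hk i⟩⟩, hi⟩⟩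
  rw [decoratedCycleType, hparts, map_val, Multiset.map_map]
  refine Multiset.map_congr rfl fun i _ => ?_
  change (#(univ.map (Embedding.sigmaMk i)), ∏ x ∈ univ.map (Embedding.sigmaMk i), f x) = _
  rw [card_map, prod_map, card_univ, Fintype.card_fin]
  rfl

end blockRotation

section classification

variable [Fintype α] [DecidableEq α]

lemma exists_equiv_semiconj_blockRotation (σ : Perm α) :
    ∃ E : (Σ O : σ.orbitPartition.parts, Fin #O.1) ≃ α,
      Semiconj E (blockRotation fun O : σ.orbitPartition.parts => #O.1) σ ∧
        ∀ O t, E ⟨O, t⟩ ∈ O.1 := by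
  choose r hr using fun O : σ.orbitPartition.parts => σ.orbitPartition.nonempty_of_mem_parts O.2
  have hpart (O) : σ.orbitPartition.part (r O) = O.1 := σ.orbitPartition.part_eq_of_mem O.2 (hr O)
  have hcard (O) : #O.1 = minimalPeriod σ (r O) := by rw [← hpart, card_orbitPartition_part]
  let E (x : Σ O : σ.orbitPartition.parts, Fin #O.1) : α := (σ ^ (x.2 : ℕ)) (r x.1)
  have hmem (O t) : E ⟨O, t⟩ ∈ O.1 := by
    rw [← hpart O, mem_orbitPartition_part]
    exact ⟨t, by simp [E]⟩
  have hinj : Injective E := by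
    rintro ⟨O, t⟩ ⟨O', t'⟩ h
    obtain rfl : O = O' := Subtype.ext
      (σ.orbitPartition.eq_of_mem_parts O.2 O'.2 (hmem O t) (h ▸ hmem O' t'))
    have : (t : ℕ) = t' := iterate_injOn_Iio_minimalPeriod (f := σ)
      (t.2.trans_eq (hcard O)) (t'.2.trans_eq (hcard O)) (by simpa only [iterate_eq_pow] using h)
    rw [Fin.val_inj.1 this]
  have hcard_sigma : Fintype.card (Σ O : σ.orbitPartition.parts, Fin #O.1) = Fintype.card α := by
    rw [Fintype.card_sigma]
    simp only [Fintype.card_fin]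
    rw [sum_coe_sort σ.orbitPartition.parts card]
    exact σ.orbitPartition.sum_card_parts
  refine ⟨.ofBijective E ((Fintype.bijective_iff_injective_and_card E).2 ⟨hinj, hcard_sigma⟩),
    fun ⟨O, t⟩ => ?_, hmem⟩
  change (σ ^ ((finRotate _ t : Fin _) : ℕ)) (r O) = σ ((σ ^ (t : ℕ)) (r O))
  have hmod (n : ℕ) : (σ ^ (n % #O.1)) (r O) = (σ ^ n) (r O) := by
    rw [hcard, ← iterate_eq_pow, ← iterate_eq_pow, iterate_mod_minimalPeriod_eq]
  rw [Fin.val_finRotate, hmod, pow_succ', Perm.mul_apply]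

lemma exists_semiconj_of_decoratedCycleType_eq {A : Type*} [CommMonoid A] {f g : α → A}
    {σ τ : Perm α} (h : decoratedCycleType f σ = decoratedCycleType g τ) :
    ∃ π : Perm α, Semiconj π σ τ ∧
      ∀ x, ∏ y ∈ σ.orbitPartition.part x, f y = ∏ y ∈ σ.orbitPartition.part x, g (π y) := by
  classical
  rw [decoratedCycleType_eq_map_univ, decoratedCycleType_eq_map_univ] at h
  obtain ⟨φ, hφ⟩ := Fintype.exists_equiv_of_map_univ_val_eq h
  obtain ⟨Eσ, hσ, hEσ⟩ := exists_equiv_semiconj_blockRotation σ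
  obtain ⟨Eτ, hτ, hEτ⟩ := exists_equiv_semiconj_blockRotation τ
  have hk (O) : #O.1 = #(φ O).1 := (congrArg Prod.fst (hφ O)).symm
  let R : (Σ O : σ.orbitPartition.parts, Fin #O.1) ≃ Σ O : τ.orbitPartition.parts, Fin #O.1 :=
    sigmaCongr φ fun O => finCongr (hk O)
  have hR : Semiconj R (blockRotation _) (blockRotation _) :=
    semiconj_sigmaCongr_blockRotation _ φ (k' := fun O => #O.1) hk
  refine ⟨(Eσ.symm.trans R).trans Eτ, hτ.comp_left (hR.comp_left
      (hσ.inverse_left Eσ.left_inv Eσ.right_inv : Semiconj Eσ.symm σ _)), fun x => ?_⟩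
  set π := (Eσ.symm.trans R).trans Eτ
  have hmaps (O : σ.orbitPartition.parts) (y : α) (hy : y ∈ O.1) : π y ∈ (φ O).1 := by
    obtain ⟨⟨O', t⟩, rfl⟩ := Eσ.surjective y
    obtain rfl : O' = O := Subtype.ext (σ.orbitPartition.eq_of_mem_parts O'.2 O.2 (hEσ O' t) hy)
    change Eτ (R (Eσ.symm (Eσ ⟨O', t⟩))) ∈ _
    rw [symm_apply_apply]
    exact hEτ (φ O') (finCongr (hk O') t)
  let O : σ.orbitPartition.parts := ⟨_, σ.orbitPartition_part_mem x⟩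
  have himage : O.1.map π.toEmbedding = (φ O).1 :=
    eq_of_subset_of_card_le (fun z hz => by
      obtain ⟨y, hy, rfl⟩ := mem_map.1 hz
      exact hmaps O y hy) (by rw [card_map, hk])
  calc ∏ y ∈ O.1, f y = ∏ z ∈ (φ O).1, g z := (congrArg Prod.snd (hφ O)).symm
    _ = ∏ y ∈ O.1, g (π y) := by rw [← himage, prod_map]; rfl

lemma exists_decoratedCycleType_eq {A : Type*} [CommMonoid A] [DecidableEq A]
    (μ : Multiset (ℕ × A)) (hpos : ∀ d ∈ μ, 0 < d.1)
    (hsum : (μ.map Prod.fst).sum = Fintype.card α) :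
    ∃ (f : α → A) (σ : Perm α), decoratedCycleType f σ = μ := by
  classical
  let k (i : μ) : ℕ := (i : ℕ × A).1
  have hk (i : μ) : 0 < k i := hpos _ (Multiset.coe_mem)
  let marker (x : Σ i, Fin (k i)) : A := if (x.2 : ℕ) = 0 then (x.1 : ℕ × A).2 else 1
  have hmodel : decoratedCycleType marker (blockRotation k) = μ := by
    rw [decoratedCycleType_blockRotation hk]
    convert Multiset.map_univ_coe μ with i
    rw [prod_eq_single_of_mem (⟨0, hk i⟩ : Fin (k i)) (mem_univ _) fun t _ ht => if_neg ?_]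
    · exact if_pos rfl
    · exact fun h => ht (Fin.ext h)
  have hcard : Fintype.card (Σ i, Fin (k i)) = Fintype.card α := by
    rw [Fintype.card_sigma, ← hsum, ← Multiset.map_univ μ Prod.fst, ← sum_eq_multiset_sum]
    simp [k]
  let E := Fintype.equivOfCardEq hcard
  exact ⟨marker ∘ E.symm, E.permCongr (blockRotation k), by
    rw [decoratedCycleType_permCongr, hmodel]⟩

end classification

section coboundary

variable {A : Type*} [CommGroup A] (σ : Perm α)

def coboundary : (α → A) →* (α → A) where
  toFun h x := h x / h (σ.symm x)
  map_one' := by ext; simp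
  map_mul' h g := by ext x; exact mul_div_mul_comm _ _ _ _

lemma apply_eq_of_mem_ker_coboundary [Finite α] {h : α → A} (hh : h ∈ σ.coboundary.ker)
    {x y : α} (hxy : σ.SameCycle x y) : h x = h y := by
  have hstep (z : α) : h (σ z) = h z := by
    simpa [coboundary, div_eq_one] using congrFun hh (σ z)
  obtain ⟨i, -, rfl⟩ := hxy.exists_pow_eq'
  clear hxy
  induction i with
  | zero => rfl
  | succ i ih => rw [pow_succ', Perm.mul_apply, hstep, ih]

variable [Fintype α] [DecidableEq α]

def orbitProd : (α → A) →* (σ.orbitPartition.parts → A) where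
  toFun u O := ∏ x ∈ O.1, u x
  map_one' := by ext; simp
  map_mul' u v := by ext O; exact prod_mul_distrib

lemma range_coboundary_le_ker_orbitProd :
    (σ.coboundary (A := A)).range ≤ σ.orbitProd.ker := by
  rintro _ ⟨h, rfl⟩
  ext O
  simp [coboundary, orbitProd, prod_div_distrib, prod_comp_symm_of_mem_orbitPartition O.2]

lemma orbitProd_surjective : Surjective (σ.orbitProd (A := A)) := by
  choose r hr using fun O : σ.orbitPartition.parts => σ.orbitPartition.nonempty_of_mem_parts O.2
  intro v
  refine ⟨fun x => if x = r ⟨_, σ.orbitPartition_part_mem x⟩ then v ⟨_, σ.orbitPartition_part_mem x⟩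
    else 1, funext fun O => ?_⟩
  have hO : ∀ x ∈ O.1, (if x = r ⟨_, σ.orbitPartition_part_mem x⟩
      then v ⟨_, σ.orbitPartition_part_mem x⟩ else 1) = if x = r O then v O else 1 := by
    intro x hx
    rw [show (⟨_, σ.orbitPartition_part_mem x⟩ : σ.orbitPartition.parts) = O from
      Subtype.ext (σ.orbitPartition.part_eq_of_mem O.2 hx)]
  change ∏ x ∈ O.1, _ = v O
  rw [prod_congr rfl hO, prod_ite_eq', if_pos (hr O)]

lemma card_ker_coboundary_le [Finite A] :
    Nat.card (σ.coboundary (A := A)).ker ≤ Nat.card (σ.orbitPartition.parts → A) := by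
  choose r hr using fun O : σ.orbitPartition.parts => σ.orbitPartition.nonempty_of_mem_parts O.2
  refine Nat.card_le_card_of_injective (fun h O => h.1 (r O)) fun h h' hhh' => ?_
  ext x
  let O : σ.orbitPartition.parts := ⟨_, σ.orbitPartition_part_mem x⟩
  have hx : σ.SameCycle x (r O) := mem_orbitPartition_part.1 (hr O)
  rw [apply_eq_of_mem_ker_coboundary σ h.2 hx, apply_eq_of_mem_ker_coboundary σ h'.2 hx]
  exact congrFun hhh' O

lemma range_coboundary_eq_ker_orbitProd [Finite A] :
    (σ.coboundary (A := A)).range = σ.orbitProd.ker := by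
  refine Subgroup.eq_of_le_of_card_ge (range_coboundary_le_ker_orbitProd σ) ?_
  have hD := (σ.coboundary (A := A)).ker.card_mul_index
  have hP := (σ.orbitProd (A := A)).ker.card_mul_index
  rw [Subgroup.index_ker] at hD hP
  rw [MonoidHom.range_eq_top_of_surjective _ (orbitProd_surjective σ), Subgroup.card_top] at hP
  have hpos : 0 < Nat.card (σ.orbitPartition.parts → A) := Nat.card_pos
  nlinarith [card_ker_coboundary_le (A := A) σ]

lemma exists_mul_div_eq_of_prod_eq [Finite A] {f g : α → A}
    (hfg : ∀ O ∈ σ.orbitPartition.parts, ∏ x ∈ O, f x = ∏ x ∈ O, g x) :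
    ∃ h : α → A, ∀ x, h x * f x / h (σ.symm x) = g x := by
  have hker : g / f ∈ σ.orbitProd.ker := by
    ext O
    simp [orbitProd, prod_div_distrib, hfg O O.2]
  rw [← range_coboundary_eq_ker_orbitProd] at hker
  obtain ⟨h, hh⟩ := hker
  refine ⟨h, fun x => ?_⟩
  have hx : h x / h (σ.symm x) = g x / f x := congrFun hh x
  rw [mul_div_right_comm, hx, div_mul_cancel]

end coboundary

end Equiv.Perm

namespace SemidirectProduct

open Equiv.Perm

variable {α A : Type*} [CommGroup A] {φ : Perm α →* MulAut (α → A)}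

lemma inr_mul_mk_mul_inr_inv (hφ : ∀ σ f, φ σ f = f ∘ σ.symm) (π : Perm α) (f : α → A)
    (σ : Perm α) : inr π * (⟨f, σ⟩ : (α → A) ⋊[φ] Perm α) * (inr π)⁻¹ =
      ⟨f ∘ π.symm, π.permCongr σ⟩ := by
  ext x
  · simp [hφ]
  · simp

lemma inl_mul_mk_mul_inl_inv (hφ : ∀ σ f, φ σ f = f ∘ σ.symm) (h f : α → A) (σ : Perm α) :
    inl h * (⟨f, σ⟩ : (α → A) ⋊[φ] Perm α) * (inl h)⁻¹ =
      ⟨fun x => h x * f x / h (σ.symm x), σ⟩ := by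
  ext x
  · simp [hφ, div_eq_mul_inv]
  · simp

variable [Fintype α] [DecidableEq α]

lemma decoratedCycleType_eq_of_isConj (hφ : ∀ σ f, φ σ f = f ∘ σ.symm)
    {w w' : (α → A) ⋊[φ] Perm α} (h : IsConj w w') :
    decoratedCycleType w.left w.right = decoratedCycleType w'.left w'.right := by
  obtain ⟨⟨g, π⟩, rfl⟩ := isConj_iff.1 h
  obtain ⟨f, σ⟩ := w
  rw [mk_eq_inl_mul_inr π g, show ∀ a b c : (α → A) ⋊[φ] Perm α, a * b * c * (a * b)⁻¹ =
    a * (b * c * b⁻¹) * a⁻¹ from fun _ _ _ => by group, inr_mul_mk_mul_inr_inv hφ,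
    inl_mul_mk_mul_inl_inv hφ, decoratedCycleType_mul_div, decoratedCycleType_permCongr]

lemma isConj_of_decoratedCycleType_eq [Finite A] (hφ : ∀ σ f, φ σ f = f ∘ σ.symm)
    {f g : α → A} {σ τ : Perm α} (h : decoratedCycleType f σ = decoratedCycleType g τ) :
    IsConj (⟨f, σ⟩ : (α → A) ⋊[φ] Perm α) ⟨g, τ⟩ := by
  obtain ⟨π, hπ, hprod⟩ := exists_semiconj_of_decoratedCycleType_eq h
  have hτ : π.permCongr σ = τ := Equiv.ext fun x => by simpa using hπ (π.symm x)
  obtain ⟨h, hh⟩ := exists_mul_div_eq_of_prod_eq τ (f := f ∘ π.symm) (g := g) fun O hO => by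
    obtain ⟨y, rfl⟩ := mem_orbitPartition_parts.1 hO
    obtain ⟨x, rfl⟩ := π.surjective y
    rw [← hτ, orbitPartition_part_permCongr, prod_map, prod_map]
    simpa using hprod x
  refine IsConj.trans (b := ⟨f ∘ π.symm, τ⟩) (isConj_iff.2 ⟨inr π, ?_⟩) (isConj_iff.2 ⟨inl h, ?_⟩)
  · rw [inr_mul_mk_mul_inr_inv hφ, hτ]
  · rw [inl_mul_mk_mul_inl_inv hφ]
    exact congrArg₂ _ (funext hh) rfl

lemma isConj_iff_decoratedCycleType_eq [Finite A] (hφ : ∀ σ f, φ σ f = f ∘ σ.symm)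
    (w w' : (α → A) ⋊[φ] Perm α) :
    IsConj w w' ↔ decoratedCycleType w.left w.right = decoratedCycleType w'.left w'.right :=
  ⟨decoratedCycleType_eq_of_isConj hφ, isConj_of_decoratedCycleType_eq hφ⟩

lemma range_decoratedCycleType [DecidableEq A] :
    Set.range (fun w : (α → A) ⋊[φ] Perm α => decoratedCycleType w.left w.right) =
      {μ | (∀ d ∈ μ, 0 < d.1) ∧ (μ.map Prod.fst).sum = Fintype.card α} := by
  ext μ
  constructor
  · rintro ⟨w, rfl⟩
    exact ⟨fun _ => pos_of_mem_decoratedCycleType, sum_fst_decoratedCycleType _ _⟩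
  · rintro ⟨hpos, hsum⟩
    obtain ⟨f, σ, h⟩ := exists_decoratedCycleType_eq μ hpos hsum
    exact ⟨⟨f, σ⟩, h⟩

end SemidirectProduct

namespace Multiset

variable {β ι : Type*} [Fintype ι] [DecidableEq ι]

lemma sum_filter_snd_eq (μ : Multiset (β × ι)) : ∑ j, μ.filter (·.2 = j) = μ := by
  induction μ using Multiset.induction_on with
  | empty => simp
  | cons a μ ih => simp [Multiset.filter_cons, Finset.sum_add_distrib, ih]

lemma filter_finset_sum {γ δ : Type*} (s : Finset γ) (T : γ → Multiset δ) (q : δ → Prop)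
    [DecidablePred q] : (∑ j ∈ s, T j).filter q = ∑ j ∈ s, (T j).filter q :=
  map_sum (⟨⟨filter q, filter_zero q⟩, filter_add q⟩ : Multiset δ →+ Multiset δ) T s

def prodEquivPi : Multiset (β × ι) ≃ (ι → Multiset β) where
  toFun μ j := (μ.filter (·.2 = j)).map Prod.fst
  invFun p := ∑ j, (p j).map (·, j)
  left_inv μ := by
    conv_rhs => rw [← sum_filter_snd_eq μ]
    refine Finset.sum_congr rfl fun j _ => ?_
    rw [map_map]
    conv_rhs => rw [← map_id (μ.filter (·.2 = j))]
    exact map_congr rfl fun x hx => by simp [(of_mem_filter hx).symm]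
  right_inv p := by
    funext j
    simp only [filter_finset_sum, filter_map]
    rw [Finset.sum_eq_single j]
    · simp
    · intro j' _ hj'
      simp [hj']
    · simp

@[simp]
lemma mem_prodEquivPi {μ : Multiset (β × ι)} {b : β} {j : ι} :
    b ∈ prodEquivPi μ j ↔ (b, j) ∈ μ := by
  simp [prodEquivPi]

lemma sum_map_fst_eq_sum_prodEquivPi [AddCommMonoid β] (μ : Multiset (β × ι)) :
    (μ.map Prod.fst).sum = ∑ j, (prodEquivPi μ j).sum := by
  conv_lhs => rw [← sum_filter_snd_eq μ]
  change sumAddMonoidHom (mapAddMonoidHom Prod.fst (∑ j, _)) = _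
  rw [map_sum, map_sum]
  rfl

end Multiset

def Nat.Partition.sigmaEquiv : (Σ k, Nat.Partition k) ≃ {s : Multiset ℕ // ∀ i ∈ s, 0 < i} where
  toFun P := ⟨P.2.parts, fun _ => P.2.parts_pos⟩
  invFun s := ⟨s.1.sum, ⟨s.1, fun hi => s.2 _ hi, rfl⟩⟩
  left_inv := fun ⟨_, ⟨_, _, h⟩⟩ => by subst h; rfl
  right_inv _ := rfl

open Multiset in
def labelledPartitionEquiv (ι : Type*) [Fintype ι] [DecidableEq ι] (m : ℕ) :
    {μ : Multiset (ℕ × ι) // (∀ d ∈ μ, 0 < d.1) ∧ (μ.map Prod.fst).sum = m} ≃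
      {p : ι → Σ k, Nat.Partition k // ∑ j, (p j).1 = m} :=
  let splitPositive : {μ : Multiset (ℕ × ι) // ∀ d ∈ μ, 0 < d.1} ≃ (ι → Σ k, Nat.Partition k) :=
    (prodEquivPi.subtypeEquiv (q := fun p => ∀ j, ∀ i ∈ p j, 0 < i) fun μ => by
        simp only [mem_prodEquivPi, Prod.forall]; exact forall_comm).trans <|
      Equiv.subtypePiEquivPi.trans (Equiv.piCongrRight fun _ => Nat.Partition.sigmaEquiv.symm)
  (Equiv.subtypeSubtypeEquivSubtypeInter _ _).symm.trans <|
    Equiv.subtypeEquiv splitPositive fun μ => by rw [sum_map_fst_eq_sum_prodEquivPi]; rfl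

theorem wreath_product_conjClasses_card_general (n m : ℕ) :
    Nat.card (ConjClasses
        ((Fin m → Multiplicative (ZMod (n + 1))) ⋊[wreathPermHom n m] Equiv.Perm (Fin m)))
      = Nat.card {p : Fin (n + 1) → Σ k : ℕ, Nat.Partition k // (∑ j, (p j).1) = m} := by
  have hφ : ∀ σ f, wreathPermHom n m σ f = f ∘ σ.symm := fun _ _ => rfl
  let e : Multiplicative (ZMod (n + 1)) ≃ Fin (n + 1) :=
    Multiplicative.toAdd.trans (ZMod.finEquiv (n + 1)).symm.toEquiv
  rw [Nat.card_conjClasses_eq_card_range _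
      (SemidirectProduct.isConj_iff_decoratedCycleType_eq hφ),
    SemidirectProduct.range_decoratedCycleType, Fintype.card_fin]
  exact (Nat.card_congr (labelledPartitionEquiv _ m)).trans <| Nat.card_congr <|
    Equiv.subtypeEquiv (e.arrowCongr (Equiv.refl _)) fun p => by rw [← e.symm.sum_comp]; rfl

/-- For every positive integer `m`, the number of conjugacy classes of the wreath
product `ℤ/(n+1) ≀ S_m = (ℤ/(n+1))^m ⋊ S_m` equals the number of `(n+1)`-tuples of
partitions `(λ^0, …, λ^n)` with `∑_j |λ^j| = m`, i.e. the number of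
`ℤ/(n+1)`-weighted partitions of `m`. -/
theorem wreath_product_conjClasses_card (n m : ℕ) (hm : 0 < m) :
    Nat.card (ConjClasses
        ((Fin m → Multiplicative (ZMod (n + 1))) ⋊[wreathPermHom n m] Equiv.Perm (Fin m)))
      = Nat.card {p : Fin (n + 1) → Σ k : ℕ, Nat.Partition k // (∑ j, (p j).1) = m} :=
  wreath_product_conjClasses_card_general n m
end
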